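/- Every irrational real number is a horospherical limit point of SL₂(ℤ): for every irrational z ∈ ℝ and every r > 0 there exists γ ∈ SL₂(ℤ) such that |γ·i − (z + r·i)| < r, where γ·i denotes the image of i ∈ ℍ under the Möbius action of γ, regarded as an element of ℂ. That is, every open horoball based at z meets the orbit SL₂(ℤ)·i. -/

import Mathlib

/-!
For `γ = (a b; c d)` in `SL₂(ℤ)` one computes `γ·i = ((ac + bd) + i) / (c² + d²)`. Its real part
lies within `1/c²` of `a/c`, and its imaginary part lies in `[1/(2c²), 1/c²]` as soon as
`|d| ≤ |c|`. Since the horoball of radius `r` at `z` is `{x + iy : (x - z)² + y² < 2ry}`, it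
contains `γ·i` once `|z - a/c| < 1/c²` and `r c² > 5`. An irrational `z` has infinitely many
approximations `a/c` in lowest terms with `|z - a/c| < 1/c²`, hence ones with `c` arbitrarily
large, and the coprime column `(a, c)` completes to some `γ ∈ SL₂(ℤ)` with `0 ≤ d < c`.
-/

open Matrix Complex

/-- The image of `i ∈ ℍ` under the Möbius action of `γ ∈ SL₂(ℤ)`, as a complex number. -/
noncomputable def moebiusActI (γ : Matrix.SpecialLinearGroup (Fin 2) ℤ) : ℂ :=
  (((γ : Matrix (Fin 2) (Fin 2) ℤ) 0 0 : ℂ) * Complex.I +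
      ((γ : Matrix (Fin 2) (Fin 2) ℤ) 0 1 : ℂ)) /
    (((γ : Matrix (Fin 2) (Fin 2) ℤ) 1 0 : ℂ) * Complex.I +
      ((γ : Matrix (Fin 2) (Fin 2) ℤ) 1 1 : ℂ))

open scoped MatrixGroups

theorem Matrix.SpecialLinearGroup.det_fin_two_eq_one {R : Type*} [CommRing R] (A : SL(2, R)) :
    A 0 0 * A 1 1 - A 0 1 * A 1 0 = 1 :=
  det_fin_two (A : Matrix (Fin 2) (Fin 2) R) ▸ A.det_coe

theorem Rat.finite_setOf_den_le_and_abs_sub_lt_one (ξ : ℝ) (N : ℕ) :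
    {q : ℚ | q.den ≤ N ∧ |ξ - q| < 1}.Finite := by
  obtain ⟨M, hM⟩ := exists_nat_gt ((|ξ| + 1) * N)
  have hinj : Function.Injective fun q : ℚ ↦ (q.num, q.den) := fun q q' h ↦
    Rat.ext (congrArg Prod.fst h) (congrArg Prod.snd h)
  refine ((Set.finite_Icc (-(M : ℤ), 0) (M, N)).preimage hinj.injOn).subset ?_
  rintro q ⟨hden, hq⟩
  have hnum : |(q.num : ℝ)| < M := calc
    |(q.num : ℝ)| = |(q : ℝ)| * q.den := by
      rw [Rat.cast_def, abs_div, Nat.abs_cast, div_mul_cancel₀ _ (by positivity)]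
    _ ≤ (|ξ| + 1) * N := by
      gcongr
      linarith [abs_sub_abs_le_abs_sub (q : ℝ) ξ, abs_sub_comm (q : ℝ) ξ]
    _ < M := hM
  obtain ⟨hlo, hhi⟩ := abs_lt.mp hnum
  exact ⟨⟨by exact_mod_cast hlo.le, Nat.zero_le _⟩, by exact_mod_cast hhi.le, hden⟩

theorem Real.exists_rat_den_gt_and_abs_sub_lt_one_div_den_sq {ξ : ℝ} (hξ : Irrational ξ)
    (N : ℕ) : ∃ q : ℚ, N < q.den ∧ |ξ - q| < 1 / (q.den : ℝ) ^ 2 := by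
  obtain ⟨q, hq, hqN⟩ := ((infinite_rat_abs_sub_lt_one_div_den_sq_of_irrational hξ).sdiff
    (Rat.finite_setOf_den_le_and_abs_sub_lt_one ξ N)).nonempty
  refine ⟨q, not_le.mp fun hden ↦ hqN ⟨hden, hq.trans_le ?_⟩, hq⟩
  exact div_le_one_of_le₀ (one_le_pow₀ (mod_cast q.pos)) (by positivity)

theorem exists_SL2Z_col_zero_eq_of_isCoprime {p q : ℤ} (hpq : IsCoprime p q) (hq : 0 < q) :
    ∃ γ : SL(2, ℤ), γ 0 0 = p ∧ γ 1 0 = q ∧ 0 ≤ γ 1 1 ∧ γ 1 1 < q := by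
  obtain ⟨u, v, huv⟩ := hpq
  have hdet : p * (u % q) - -(v + p * (u / q)) * q = 1 := by
    linear_combination p * Int.emod_add_mul_ediv u q + huv
  exact ⟨⟨!![p, -(v + p * (u / q)); q, u % q], by rwa [det_fin_two_of]⟩, rfl, rfl,
    Int.emod_nonneg u hq.ne', Int.emod_lt_of_pos u hq⟩

theorem norm_sub_add_mul_I_lt_iff {w : ℂ} {x r : ℝ} (hr : 0 ≤ r) :
    ‖w - (x + r * I)‖ < r ↔ (w.re - x) ^ 2 + w.im ^ 2 < 2 * r * w.im := by
  have hw : w - (x + r * I) = ((w.re - x : ℝ) : ℂ) + ((w.im - r : ℝ) : ℂ) * I := by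
    apply Complex.ext <;> simp
  rw [hw, norm_add_mul_I, Real.sqrt_lt (by positivity) hr]
  constructor <;> intro h <;> linarith

section moebiusActI

variable (γ : SL(2, ℤ))

theorem moebiusActI_eq :
    moebiusActI γ =
      ((γ 0 0 * γ 1 0 + γ 0 1 * γ 1 1 : ℝ) + I) / ((γ 1 0 ^ 2 + γ 1 1 ^ 2 : ℝ) : ℂ) := by
  have hdet : (γ 0 0 * γ 1 1 - γ 0 1 * γ 1 0 : ℂ) = 1 := by
    exact_mod_cast γ.det_fin_two_eq_one
  have hs : ((γ 1 0 ^ 2 + γ 1 1 ^ 2 : ℝ) : ℂ) ≠ 0 :=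
    mod_cast (ModularGroup.bottom_row_coprime γ).sq_add_sq_ne_zero
  have hc : (γ 1 0 : ℂ) * I + γ 1 1 ≠ 0 := fun h ↦ hs <| by
    have h_re := congrArg re h
    have h_im := congrArg im h
    simp at h_re h_im
    simp [h_re, h_im]
  rw [moebiusActI, div_eq_div_iff hc hs]
  push_cast
  linear_combination (-(γ 1 0 : ℂ)) * I_sq + ((γ 1 1 : ℂ) * I - γ 1 0) * hdet

theorem moebiusActI_re :
    (moebiusActI γ).re = (γ 0 0 * γ 1 0 + γ 0 1 * γ 1 1 : ℝ) / (γ 1 0 ^ 2 + γ 1 1 ^ 2) := by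
  rw [moebiusActI_eq, div_ofReal_re]
  simp

theorem moebiusActI_im : (moebiusActI γ).im = 1 / (γ 1 0 ^ 2 + γ 1 1 ^ 2 : ℝ) := by
  rw [moebiusActI_eq, div_ofReal_im]
  simp

variable {γ}

theorem abs_moebiusActI_re_sub_div_le (hc : γ 1 0 ≠ 0) :
    |(moebiusActI γ).re - γ 0 0 / γ 1 0| ≤ 1 / (γ 1 0 : ℝ) ^ 2 := by
  have hdet : (γ 0 0 * γ 1 1 - γ 0 1 * γ 1 0 : ℝ) = 1 := by
    exact_mod_cast γ.det_fin_two_eq_one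
  have hc' : (γ 1 0 : ℝ) ≠ 0 := mod_cast hc
  have hs : (0 : ℝ) < γ 1 0 ^ 2 + γ 1 1 ^ 2 := by positivity
  have hre : (moebiusActI γ).re - γ 0 0 / γ 1 0 = -γ 1 1 / (γ 1 0 * (γ 1 0 ^ 2 + γ 1 1 ^ 2)) := by
    rw [moebiusActI_re]
    field_simp
    linear_combination -(γ 1 1 : ℝ) * hdet
  rw [hre, abs_div, abs_neg, abs_mul, abs_of_pos hs,
    div_le_div_iff₀ (by positivity) (by positivity), ← sq_abs (γ 1 0 : ℝ), ← sq_abs (γ 1 1 : ℝ)]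
  nlinarith [two_mul_le_add_sq |(γ 1 0 : ℝ)| |(γ 1 1 : ℝ)|, abs_nonneg (γ 1 0 : ℝ)]

theorem moebiusActI_im_le (hc : γ 1 0 ≠ 0) : (moebiusActI γ).im ≤ 1 / (γ 1 0 : ℝ) ^ 2 := by
  rw [moebiusActI_im]
  exact one_div_le_one_div_of_le (by positivity) (le_add_of_nonneg_right (sq_nonneg _))

theorem one_div_two_mul_sq_le_moebiusActI_im (hc : γ 1 0 ≠ 0) (hd : |γ 1 1| ≤ |γ 1 0|) :
    1 / (2 * (γ 1 0 : ℝ) ^ 2) ≤ (moebiusActI γ).im := by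
  have hd' : (γ 1 1 : ℝ) ^ 2 ≤ γ 1 0 ^ 2 := sq_le_sq.mpr (mod_cast hd)
  rw [moebiusActI_im]
  exact one_div_le_one_div_of_le (by positivity) (by linarith)

theorem norm_moebiusActI_sub_lt {z r : ℝ} (hc : γ 1 0 ≠ 0) (hd : |γ 1 1| ≤ |γ 1 0|)
    (happrox : |z - γ 0 0 / γ 1 0| < 1 / (γ 1 0 : ℝ) ^ 2) (hr : 5 < r * γ 1 0 ^ 2) :
    ‖moebiusActI γ - (z + r * I)‖ < r := by
  set u := 1 / (γ 1 0 : ℝ) ^ 2 with hu_def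
  have hu : 0 < u := by positivity
  have hur : 5 * u < r := by
    rw [hu_def, mul_one_div, div_lt_iff₀ (by positivity)]
    exact hr
  have hr0 : 0 < r := by linarith
  rw [norm_sub_add_mul_I_lt_iff hr0.le]
  set x := (moebiusActI γ).re
  set y := (moebiusActI γ).im
  have hxz : |x - z| < 2 * u := calc
    |x - z| ≤ |x - γ 0 0 / γ 1 0| + |γ 0 0 / γ 1 0 - z| := abs_sub_le _ _ _
    _ < u + u := add_lt_add_of_le_of_lt (abs_moebiusActI_re_sub_div_le hc)
      (by rwa [abs_sub_comm])
    _ = 2 * u := by ring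
  have hy : u ≤ 2 * y := by
    have h : u / 2 = 1 / (2 * (γ 1 0 : ℝ) ^ 2) := by rw [hu_def]; ring
    linarith [one_div_two_mul_sq_le_moebiusActI_im hc hd]
  calc (x - z) ^ 2 + y ^ 2 < (2 * u) ^ 2 + u ^ 2 :=
        add_lt_add_of_lt_of_le (sq_lt_sq' (abs_lt.mp hxz).1 (abs_lt.mp hxz).2)
          (pow_le_pow_left₀ (by linarith) (moebiusActI_im_le hc) 2)
    _ = 5 * u * u := by ring
    _ < r * u := mul_lt_mul_of_pos_right hur hu
    _ ≤ 2 * r * y := by nlinarith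

end moebiusActI

/-- Every irrational real number is a horospherical limit point of `SL₂(ℤ)`: every
open horoball based at an irrational `z` meets the orbit `SL₂(ℤ)·i`. -/
theorem irrational_is_horospherical_limit_point
    (z : ℝ) (hz : Irrational z) (r : ℝ) (hr : 0 < r) :
    ∃ γ : Matrix.SpecialLinearGroup (Fin 2) ℤ,
      ‖moebiusActI γ - ((z : ℂ) + (r : ℂ) * Complex.I)‖ < r := by
  obtain ⟨N, hN⟩ := exists_nat_gt (5 / r)
  obtain ⟨q, hqN, hq⟩ := Real.exists_rat_den_gt_and_abs_sub_lt_one_div_den_sq hz N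
  obtain ⟨γ, ha, hc, hd₀, hdc⟩ :=
    exists_SL2Z_col_zero_eq_of_isCoprime q.isCoprime_num_den (mod_cast q.pos)
  have hden : 5 < r * (q.den : ℝ) ^ 2 := by
    have h₁ : (1 : ℝ) ≤ q.den := mod_cast q.pos
    have h₂ : 5 / r < q.den := hN.trans (mod_cast hqN)
    rw [div_lt_iff₀ hr] at h₂
    nlinarith
  refine ⟨γ, norm_moebiusActI_sub_lt ?_ ?_ ?_ ?_⟩
  · exact hc ▸ mod_cast q.den_ne_zero
  · rw [abs_of_nonneg hd₀, hc, Nat.abs_cast]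
    exact hdc.le
  · rwa [ha, hc, Int.cast_natCast, ← Rat.cast_def]
  · rwa [hc, Int.cast_natCast]
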